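/- For every natural number n there exists K ≥ 0 such that for all k ≥ K, ‖n·3^k‖ = ‖n·3^K‖ + 3(k−K); i.e., n·3^K is stable. -/
import Mathlib


/-- `CanWrite n k`: `n` can be written using exactly `k` ones with `+` and `*`. -/
inductive CanWrite : ℕ → ℕ → Prop
  | one : CanWrite 1 1
  | add {a b j k : ℕ} : CanWrite a j → CanWrite b k → CanWrite (a + b) (j + k)
  | mul {a b j k : ℕ} : CanWrite a j → CanWrite b k → CanWrite (a * b) (j + k)

/-- Integer complexity: least number of ones needed to write `n`. -/
noncomputable def cpx (n : ℕ) : ℕ := sInf {k | CanWrite n k}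

/-- The defect `δ(n) = ‖n‖ − 3·log₃ n`. -/
noncomputable def defect (n : ℕ) : ℝ := (cpx n : ℝ) - 3 * Real.logb 3 n

/-- `n` is stable if `‖3^k n‖ = 3k + ‖n‖` for all `k`. -/
def Stable (n : ℕ) : Prop := ∀ k : ℕ, cpx (3 ^ k * n) = 3 * k + cpx n

/-- Stable complexity `‖n‖_st = min_{k≥0} (‖3^k n‖ − 3k)`. -/
noncomputable def cpxSt (n : ℕ) : ℕ := sInf {m | ∃ k : ℕ, cpx (3 ^ k * n) = m + 3 * k}

/-- Stable defect `δ_st(n) = ‖n‖_st − 3·log₃ n`. -/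
noncomputable def defectSt (n : ℕ) : ℝ := (cpxSt n : ℝ) - 3 * Real.logb 3 n

lemma canWrite_pos {a k : ℕ} (h : CanWrite a k) : 1 ≤ a ∧ 1 ≤ k := by
  induction h with
  | one => exact ⟨le_refl 1, le_refl 1⟩
  | add ha hb iha ihb => omega
  | mul ha hb iha ihb => exact ⟨Nat.mul_pos iha.1 ihb.1, by omega⟩

lemma exists_canWrite (n : ℕ) (hn : 0 < n) : ∃ k, CanWrite n k := by
  induction n with
  | zero => omega
  | succ m ih =>
    rcases Nat.eq_zero_or_pos m with h | h
    · subst h; exact ⟨1, CanWrite.one⟩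
    · obtain ⟨k, hk⟩ := ih h
      exact ⟨k + 1, CanWrite.add hk CanWrite.one⟩

lemma canWrite_cpx {n : ℕ} (hn : 0 < n) : CanWrite n (cpx n) :=
  Nat.sInf_mem (exists_canWrite n hn)

lemma cpx_le {n k : ℕ} (h : CanWrite n k) : cpx n ≤ k := Nat.sInf_le h

lemma aux_one {b j k : ℕ} (hj : 1 ≤ j) (hk : 1 ≤ k) (hb : 1 ≤ b)
    (h : b ^ 3 ≤ 3 ^ k) : (1 + b) ^ 3 ≤ 3 ^ (j + k) := by
  rcases Nat.lt_or_ge b 3 with h3 | h3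
  · interval_cases b
    · calc (1+1)^3 = 8 := by norm_num
        _ ≤ 3 ^ (1+1) := by norm_num
        _ ≤ 3 ^ (j+k) := Nat.pow_le_pow_right (by norm_num) (by omega)
    · have hk2 : 2 ≤ k := by
        by_contra hc
        interval_cases k <;> omega
      calc (1+2)^3 = 27 := by norm_num
        _ ≤ 3 ^ (1+2) := by norm_num
        _ ≤ 3 ^ (j+k) := Nat.pow_le_pow_right (by norm_num) (by omega)
  · have hbb : 3 * b ≤ b * b := Nat.mul_le_mul_right b h3
    have hbbb : 3 * (b * b) ≤ b * (b * b) := Nat.mul_le_mul_right (b * b) h3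
    have h1 : (1 + b) ^ 3 ≤ 3 * b ^ 3 := by nlinarith [hbb, hbbb, h3]
    calc (1 + b) ^ 3 ≤ 3 * b ^ 3 := h1
      _ ≤ 3 ^ 1 * 3 ^ k := by simpa using Nat.mul_le_mul_left 3 h
      _ = 3 ^ (1 + k) := (pow_add 3 1 k).symm
      _ ≤ 3 ^ (j + k) := Nat.pow_le_pow_right (by norm_num) (by omega)

lemma cube_le {n k : ℕ} (h : CanWrite n k) : n ^ 3 ≤ 3 ^ k := by
  induction h with
  | one => norm_num
  | @add a b j k ha hb iha ihb =>
    obtain ⟨ha1, hj1⟩ := canWrite_pos ha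
    obtain ⟨hb1, hk1⟩ := canWrite_pos hb
    rcases Nat.lt_or_ge a 2 with h2 | h2
    · have : a = 1 := by omega
      subst this
      exact aux_one hj1 hk1 hb1 ihb
    · rcases Nat.lt_or_ge b 2 with h2b | h2b
      · have : b = 1 := by omega
        subst this
        have := aux_one hk1 hj1 (by omega : 1 ≤ a) iha
        calc (a + 1) ^ 3 = (1 + a) ^ 3 := by ring
          _ ≤ 3 ^ (k + j) := this
          _ = 3 ^ (j + k) := by ring_nf
      · have hab : a + b ≤ a * b := by nlinarith
        calc (a + b) ^ 3 ≤ (a * b) ^ 3 := Nat.pow_le_pow_left hab 3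
          _ = a ^ 3 * b ^ 3 := by ring
          _ ≤ 3 ^ j * 3 ^ k := Nat.mul_le_mul iha ihb
          _ = 3 ^ (j + k) := (pow_add 3 j k).symm
  | @mul a b j k ha hb iha ihb =>
    calc (a * b) ^ 3 = a ^ 3 * b ^ 3 := by ring
      _ ≤ 3 ^ j * 3 ^ k := Nat.mul_le_mul iha ihb
      _ = 3 ^ (j + k) := (pow_add 3 j k).symm

lemma cpx_three_mul {m : ℕ} (hm : 0 < m) : cpx (3 * m) ≤ 3 + cpx m := by
  have h3 : CanWrite 3 3 := by
    have h2 : CanWrite 2 2 := CanWrite.add CanWrite.one CanWrite.one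
    exact CanWrite.add h2 CanWrite.one
  exact cpx_le (CanWrite.mul h3 (canWrite_cpx hm))

theorem eventually_stable (n : ℕ) (hn : 0 < n) :
    ∃ K : ℕ, ∀ k : ℕ, K ≤ k → cpx (n * 3 ^ k) = cpx (n * 3 ^ K) + 3 * (k - K) := by
  have hlow : ∀ k : ℕ, 3 * k ≤ cpx (n * 3 ^ k) := by
    intro k
    have hpos : 0 < n * 3 ^ k := by positivity
    have hc := cube_le (canWrite_cpx hpos)
    have h2 : (3 : ℕ) ^ (3 * k) ≤ (n * 3 ^ k) ^ 3 := by
      calc (3 : ℕ) ^ (3 * k) = (3 ^ k) ^ 3 := by rw [pow_mul']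
        _ ≤ (n * 3 ^ k) ^ 3 := Nat.pow_le_pow_left (Nat.le_mul_of_pos_left _ hn) 3
    exact (Nat.pow_le_pow_iff_right (by norm_num)).mp (le_trans h2 hc)
  have hstep : ∀ k : ℕ, cpx (n * 3 ^ (k + 1)) ≤ cpx (n * 3 ^ k) + 3 := by
    intro k
    have he : n * 3 ^ (k + 1) = 3 * (n * 3 ^ k) := by ring
    rw [he]
    have := cpx_three_mul (show 0 < n * 3 ^ k by positivity)
    omega
  set g : ℕ → ℕ := fun k => cpx (n * 3 ^ k) - 3 * k with hg
  have hgstep : ∀ k, g (k + 1) ≤ g k := by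
    intro k
    have h1 := hstep k
    have h2 := hlow k
    have h3 := hlow (k + 1)
    simp only [hg]
    omega
  have hmono : ∀ K d, g (K + d) ≤ g K := by
    intro K d
    induction d with
    | zero => exact le_refl _
    | succ d ih => exact le_trans (hgstep (K + d)) ih
  obtain ⟨K, hK⟩ : ∃ K, g K = sInf (Set.range g) := by
    obtain ⟨K, hK⟩ := Nat.sInf_mem (⟨g 0, 0, rfl⟩ : (Set.range g).Nonempty)
    exact ⟨K, hK⟩
  refine ⟨K, fun k hk => ?_⟩
  have h1 : g k ≤ g K := by
    have := hmono K (k - K)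
    rwa [Nat.add_sub_cancel' hk] at this
  have h2 : g K ≤ g k := hK ▸ Nat.sInf_le ⟨k, rfl⟩
  have e1 : g k = cpx (n * 3 ^ k) - 3 * k := rfl
  have e2 : g K = cpx (n * 3 ^ K) - 3 * K := rfl
  have := hlow k
  have := hlow K
  omega
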